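/- arXiv:0912.1361 — 3 statements merged into one kernel-verified Lean document; each statement's English description precedes it below -/
import Mathlib

section
/- For every n ≥ 5, there is no simsun permutation of {1,…,n} avoiding both patterns 123 and 231, and there is no simsun permutation of {1,…,n} avoiding both patterns 123 and 312. -/
/-- `π` is simsun: for every `k`, the subword of the one-line notation of `π`
consisting of the `k` smallest entries (i.e. the values `< k`, in 0-based form)
contains no three consecutive decreasing elements.  Here "three consecutive
decreasing elements of the subword" means positions `a < b < c` whose values are
all `< k`, with no position carrying a value `< k` strictly between `a` and `b`
nor strictly between `b` and `c`, and with `π a > π b > π c`. -/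
def IsSimsun {n : ℕ} (π : Equiv.Perm (Fin n)) : Prop :=
  ∀ k : ℕ, ¬ ∃ a b c : Fin n, a < b ∧ b < c ∧
    (π a : ℕ) < k ∧ (π b : ℕ) < k ∧ (π c : ℕ) < k ∧
    (∀ m : Fin n, a < m → m < b → k ≤ (π m : ℕ)) ∧
    (∀ m : Fin n, b < m → m < c → k ≤ (π m : ℕ)) ∧
    (π c : ℕ) < (π b : ℕ) ∧ (π b : ℕ) < (π a : ℕ)

/-- `π` contains the pattern 123. -/
def Contains123 {n : ℕ} (π : Equiv.Perm (Fin n)) : Prop :=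
  ∃ a b c : Fin n, a < b ∧ b < c ∧ π a < π b ∧ π b < π c

/-- `π` contains the pattern 231. -/
def Contains231 {n : ℕ} (π : Equiv.Perm (Fin n)) : Prop :=
  ∃ a b c : Fin n, a < b ∧ b < c ∧ π c < π a ∧ π a < π b

/-- `π` contains the pattern 312. -/
def Contains312 {n : ℕ} (π : Equiv.Perm (Fin n)) : Prop :=
  ∃ a b c : Fin n, a < b ∧ b < c ∧ π b < π c ∧ π c < π a

/-!
The entries `0, …, 4` of a permutation of `Fin n`, `n ≥ 5`, read from left to right, form a
permutation of `Fin 5`. It is again simsun, since its own small-value subwords are small-value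
subwords of the original, and any occurrence of 123, 231 or 312 in it is one in the original
as well. So it suffices to check the 120 permutations of `Fin 5`.
-/

open Equiv Finset

variable {n k : ℕ}

def HasDoubleDescentBelow (π : Perm (Fin n)) (k : ℕ) : Prop :=
  ∃ a b c : Fin n, a < b ∧ b < c ∧
    (π a : ℕ) < k ∧ (π b : ℕ) < k ∧ (π c : ℕ) < k ∧
    (∀ m : Fin n, a < m → m < b → k ≤ (π m : ℕ)) ∧
    (∀ m : Fin n, b < m → m < c → k ≤ (π m : ℕ)) ∧
    (π c : ℕ) < (π b : ℕ) ∧ (π b : ℕ) < (π a : ℕ)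

instance (π : Perm (Fin n)) : DecidablePred (HasDoubleDescentBelow π) := fun _ => by
  unfold HasDoubleDescentBelow; infer_instance

theorem HasDoubleDescentBelow.min_card {π : Perm (Fin n)} (h : HasDoubleDescentBelow π k) :
    HasDoubleDescentBelow π (min k n) := by
  obtain ⟨a, b, c, hab, hbc, ha, hb, hc, gab, gbc, hcb, hba⟩ := h
  exact ⟨a, b, c, hab, hbc, lt_min ha (π a).2, lt_min hb (π b).2, lt_min hc (π c).2,
    fun m h₁ h₂ => (min_le_left _ _).trans (gab m h₁ h₂),
    fun m h₁ h₂ => (min_le_left _ _).trans (gbc m h₁ h₂), hcb, hba⟩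

-- Below any `k ≥ n` every entry is small, so only the thresholds `k ≤ n` matter.
instance : DecidablePred (IsSimsun (n := n)) := fun π =>
  decidable_of_iff (∀ k ∈ range (n + 1), ¬ HasDoubleDescentBelow π k)
    ⟨fun h k hk => h _ (mem_range_succ_iff.mpr (min_le_right k n))
      (HasDoubleDescentBelow.min_card hk), fun h k _ => h k⟩

instance : DecidablePred (Contains123 (n := n)) := fun _ => by unfold Contains123; infer_instance
instance : DecidablePred (Contains231 (n := n)) := fun _ => by unfold Contains231; infer_instance
instance : DecidablePred (Contains312 (n := n)) := fun _ => by unfold Contains312; infer_instance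

def lowValuePositions (π : Perm (Fin n)) (k : ℕ) : Finset (Fin n) := {i | (π i : ℕ) < k}

theorem card_lowValuePositions (π : Perm (Fin n)) (hk : k ≤ n) :
    #(lowValuePositions π k) = k := by
  have : lowValuePositions π k = ({j : Fin n | (j : ℕ) < k} : Finset _).map π.symm.toEmbedding :=
    by ext i; simp [lowValuePositions]
  rw [this, card_map, Fin.card_filter_val_lt, min_eq_right hk]

noncomputable def lowPositionEmb (π : Perm (Fin n)) (hk : k ≤ n) : Fin k ↪o Fin n :=
  orderEmbOfFin _ (card_lowValuePositions π hk)

section LowPattern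

variable (π : Perm (Fin n)) (hk : k ≤ n)

theorem apply_lowPositionEmb_lt (a : Fin k) : (π (lowPositionEmb π hk a) : ℕ) < k :=
  (mem_filter.mp (orderEmbOfFin_mem _ (card_lowValuePositions π hk) a)).2

theorem exists_lowPositionEmb_eq {m : Fin n} (hm : (π m : ℕ) < k) :
    ∃ a, lowPositionEmb π hk a = m := by
  change m ∈ Set.range (lowPositionEmb π hk)
  rw [lowPositionEmb, range_orderEmbOfFin]
  simpa [lowValuePositions] using hm

noncomputable def lowPattern : Perm (Fin k) :=
  Equiv.ofBijective (fun a => ⟨π (lowPositionEmb π hk a), apply_lowPositionEmb_lt π hk a⟩) <|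
    Finite.injective_iff_bijective.mp fun _ _ h =>
      (lowPositionEmb π hk).injective (π.injective (Fin.ext (Fin.mk.inj h)))

end LowPattern

def OccursAt (σ : Perm (Fin k)) (π : Perm (Fin n)) (f : Fin k ↪o Fin n) : Prop :=
  ∀ a b, σ a < σ b → π (f a) < π (f b)

section Occurrence

variable {σ : Perm (Fin k)} {π : Perm (Fin n)} {f : Fin k ↪o Fin n}

theorem Contains123.of_occursAt (h : OccursAt σ π f) (hσ : Contains123 σ) : Contains123 π :=
  let ⟨a, b, c, hab, hbc, h₁, h₂⟩ := hσ
  ⟨f a, f b, f c, f.strictMono hab, f.strictMono hbc, h _ _ h₁, h _ _ h₂⟩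

theorem Contains231.of_occursAt (h : OccursAt σ π f) (hσ : Contains231 σ) : Contains231 π :=
  let ⟨a, b, c, hab, hbc, h₁, h₂⟩ := hσ
  ⟨f a, f b, f c, f.strictMono hab, f.strictMono hbc, h _ _ h₁, h _ _ h₂⟩

theorem Contains312.of_occursAt (h : OccursAt σ π f) (hσ : Contains312 σ) : Contains312 π :=
  let ⟨a, b, c, hab, hbc, h₁, h₂⟩ := hσ
  ⟨f a, f b, f c, f.strictMono hab, f.strictMono hbc, h _ _ h₁, h _ _ h₂⟩

end Occurrence

theorem occursAt_lowPattern (π : Perm (Fin n)) (hk : k ≤ n) :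
    OccursAt (lowPattern π hk) π (lowPositionEmb π hk) :=
  fun _ _ h => h

theorem isSimsun_lowPattern {π : Perm (Fin n)} (hs : IsSimsun π) (hk : k ≤ n) :
    IsSimsun (lowPattern π hk) := by
  intro j hj
  set e := lowPositionEmb π hk
  obtain ⟨a, b, c, hab, hbc, ha, hb, hc, gab, gbc, hcb, hba⟩ := HasDoubleDescentBelow.min_card hj
  -- every entry of `π` below `k` sits at a position of the form `e i`
  have gap : ∀ {a b : Fin k}, (∀ i, a < i → i < b → min j k ≤ (lowPattern π hk i : ℕ)) →
      ∀ m, e a < m → m < e b → min j k ≤ (π m : ℕ) := by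
    intro a b g m h₁ h₂
    by_contra! hm
    obtain ⟨i, rfl⟩ := exists_lowPositionEmb_eq π hk (hm.trans_le (min_le_right _ _))
    exact (g i (e.lt_iff_lt.mp h₁) (e.lt_iff_lt.mp h₂)).not_gt hm
  exact hs _ ⟨e a, e b, e c, e.strictMono hab, e.strictMono hbc, ha, hb, hc, gap gab, gap gbc,
    hcb, hba⟩

set_option maxHeartbeats 4000000 in
set_option maxRecDepth 10000 in
theorem contains_of_isSimsun_fin_five : ∀ σ : Perm (Fin 5), IsSimsun σ →
    (Contains123 σ ∨ Contains231 σ) ∧ (Contains123 σ ∨ Contains312 σ) := by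
  decide

/-- For `n ≥ 5`, there is no simsun permutation of `{1, …, n}` avoiding both
123 and 231, and none avoiding both 123 and 312. -/
theorem simsun_avoid123_231_and_123_312_empty (n : ℕ) (hn : 5 ≤ n) :
    (∀ π : Equiv.Perm (Fin n),
        ¬ (IsSimsun π ∧ ¬ Contains123 π ∧ ¬ Contains231 π)) ∧
      (∀ π : Equiv.Perm (Fin n),
        ¬ (IsSimsun π ∧ ¬ Contains123 π ∧ ¬ Contains312 π)) := by
  have key π (hs : IsSimsun π) := contains_of_isSimsun_fin_five _ (isSimsun_lowPattern hs hn)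
  have occ π := occursAt_lowPattern π hn
  constructor
  · rintro π ⟨hs, h123, h231⟩
    rcases (key π hs).1 with h | h
    exacts [h123 (h.of_occursAt (occ π)), h231 (h.of_occursAt (occ π))]
  · rintro π ⟨hs, h123, h312⟩
    rcases (key π hs).2 with h | h
    exacts [h123 (h.of_occursAt (occ π)), h312 (h.of_occursAt (occ π))]
end

section
/- For every n ≥ 1, the number of simsun permutations of {1,…,n} that avoid both patterns 132 and 231 equals n. Moreover, a permutation π of {1,…,n} is simsun and avoids both 132 and 231 if and only if π_2 < π_3 < ⋯ < π_n. -/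
/-- `π` contains the pattern 132. -/
def Contains132 {n : ℕ} (π : Equiv.Perm (Fin n)) : Prop :=
  ∃ a b c : Fin n, a < b ∧ b < c ∧ π a < π c ∧ π c < π b

/-! Whenever a permutation has a descent `π i > π (i + 1)` at some `i ≥ 1`, the entries at
positions `i - 1, i, i + 1` form a 132, a 231 or a double descent among all `n` entries, depending
on where `π (i - 1)` falls. So the permutations in question are exactly those increasing from the
second position on. Such a permutation is fixed by its first value `v`: the remaining entries list
`{v}ᶜ` in increasing order, i.e. the permutation is the inverse of the cycle `(0 1 ⋯ v)`. -/

open Equiv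

section Patterns

variable {n : ℕ} {π : Perm (Fin n)}

theorem IsSimsun.not_consecutive_double_descent (hs : IsSimsun π) {a b c : Fin n}
    (hab : (a : ℕ) + 1 = b) (hbc : (b : ℕ) + 1 = c) : ¬ (π c < π b ∧ π b < π a) := by
  rintro ⟨hcb, hba⟩
  refine hs n ⟨a, b, c, by omega, by omega, (π a).isLt, (π b).isLt, (π c).isLt,
    fun m ham hmb => ?_, fun m hbm hmc => ?_, hcb, hba⟩
  · have : (a : ℕ) < m := ham; have : (m : ℕ) < b := hmb; omega
  · have : (b : ℕ) < m := hbm; have : (m : ℕ) < c := hmc; omega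

theorem apply_lt_apply_of_consecutive (hs : IsSimsun π) (h132 : ¬ Contains132 π)
    (h231 : ¬ Contains231 π) {a b c : Fin n} (hab : (a : ℕ) + 1 = b) (hbc : (b : ℕ) + 1 = c) :
    π b < π c := by
  have hab' : a < b := Fin.lt_def.2 (by omega)
  have hbc' : b < c := Fin.lt_def.2 (by omega)
  by_contra! hcb
  replace hcb : π c < π b := hcb.lt_of_ne (π.injective.ne hbc'.ne')
  rcases lt_or_gt_of_ne (π.injective.ne (a₁ := a) (a₂ := c) (hab'.trans hbc').ne) with
    hac | hca
  · exact h132 ⟨a, b, c, hab', hbc', hac, hcb⟩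
  · rcases lt_or_gt_of_ne (π.injective.ne hab'.ne) with hab'' | hba
    · exact h231 ⟨a, b, c, hab', hbc', hca, hab''⟩
    · exact hs.not_consecutive_double_descent hab hbc ⟨hcb, hba⟩

end Patterns

section StrictMonoSucc

variable {α : Type*} [Preorder α] {m : ℕ} {f : Fin (m + 1) → α}

theorem Fin.strictMono_comp_succ_iff :
    StrictMono (f ∘ Fin.succ) ↔
      ∀ (i : ℕ) (h : i + 1 < m + 1), 1 ≤ i → f ⟨i, by omega⟩ < f ⟨i + 1, h⟩ := by
  refine ⟨fun hf i h hi => ?_, fun hf => ?_⟩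
  · have := @hf ⟨i - 1, by omega⟩ ⟨i, by omega⟩ (Fin.mk_lt_mk.2 (by omega))
    simpa [Fin.succ, Nat.sub_add_cancel hi] using this
  · cases m with
    | zero => exact Subsingleton.strictMono _
    | succ m => exact Fin.strictMono_iff_lt_succ.2 fun i => hf (i + 1) (by omega) (by omega)

theorem apply_lt_apply_of_strictMono_comp_succ (hf : StrictMono (f ∘ Fin.succ))
    {a b c : Fin (m + 1)} (hab : a < b) (hbc : b < c) : f b < f c := by
  obtain ⟨b, rfl⟩ := Fin.exists_succ_eq.2 (Fin.ne_zero_of_lt hab)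
  obtain ⟨c, rfl⟩ := Fin.exists_succ_eq.2 (Fin.ne_zero_of_lt (hab.trans hbc))
  exact hf (Fin.succ_lt_succ_iff.1 hbc)

end StrictMonoSucc

section Characterization

variable {m : ℕ}

theorem simsun_avoid132_231_iff_strictMono_comp_succ (π : Perm (Fin (m + 1))) :
    (IsSimsun π ∧ ¬ Contains132 π ∧ ¬ Contains231 π) ↔ StrictMono (π ∘ Fin.succ) := by
  refine ⟨fun ⟨hs, h132, h231⟩ => Fin.strictMono_comp_succ_iff.2 fun i h hi => ?_,
    fun hπ => ?_⟩
  · exact apply_lt_apply_of_consecutive hs h132 h231 (a := ⟨i - 1, by omega⟩)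
      (Nat.sub_add_cancel hi) rfl
  · have key : ∀ {a b c}, a < b → b < c → π b < π c :=
      apply_lt_apply_of_strictMono_comp_succ hπ
    refine ⟨fun k ⟨a, b, c, hab, hbc, _, _, _, _, _, hcb, _⟩ => ?_,
      fun ⟨a, b, c, hab, hbc, _, hcb⟩ => ?_, fun ⟨a, b, c, hab, hbc, hca, hab'⟩ => ?_⟩
    · exact (key hab hbc).not_gt hcb
    · exact (key hab hbc).not_gt hcb
    · exact (key hab hbc).not_gt (hca.trans hab')

theorem strictMono_cycleRange_symm_comp_succ (v : Fin (m + 1)) :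
    StrictMono ((Fin.cycleRange v).symm ∘ Fin.succ) := by
  convert Fin.strictMono_succAbove v using 1
  ext1 j
  exact Fin.cycleRange_symm_succ v j

/-- Both `π ∘ succ` and `(π 0).succAbove` enumerate `{π 0}ᶜ` increasingly. -/
theorem eq_cycleRange_symm_of_strictMono_comp_succ {π : Perm (Fin (m + 1))}
    (hπ : StrictMono (π ∘ Fin.succ)) : π = (Fin.cycleRange (π 0)).symm := by
  have hrange : Set.range (π ∘ Fin.succ) = Set.range (π 0).succAbove := by
    rw [Set.range_comp, Fin.range_succ, Fin.range_succAbove, π.image_compl, Set.image_singleton]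
  have hsucc := (hπ.range_inj (Fin.strictMono_succAbove _)).1 hrange
  ext1 j
  cases j using Fin.cases with
  | zero => simp
  | succ j => simpa using congrFun hsucc j

def strictMonoCompSuccEquiv :
    {π : Perm (Fin (m + 1)) // StrictMono (π ∘ Fin.succ)} ≃ Fin (m + 1) where
  toFun π := π.1 0
  invFun v := ⟨(Fin.cycleRange v).symm, strictMono_cycleRange_symm_comp_succ v⟩
  left_inv π := Subtype.ext (eq_cycleRange_symm_of_strictMono_comp_succ π.2).symm
  right_inv v := Fin.cycleRange_symm_zero v

end Characterization

/-- For `n ≥ 1`, there are exactly `n` simsun permutations of `{1, …, n}`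
avoiding both 132 and 231; moreover such permutations are exactly those with
`π 2 < π 3 < ⋯ < π n` (0-based: increasing from the second position on). -/
theorem simsun_avoid132_231_count (n : ℕ) (hn : 1 ≤ n) :
    Nat.card {π : Equiv.Perm (Fin n) //
        IsSimsun π ∧ ¬ Contains132 π ∧ ¬ Contains231 π} = n ∧
      ∀ π : Equiv.Perm (Fin n),
        ((IsSimsun π ∧ ¬ Contains132 π ∧ ¬ Contains231 π) ↔
          ∀ (i : ℕ) (h : i + 1 < n), 1 ≤ i →
            π ⟨i, by omega⟩ < π ⟨i + 1, h⟩) := by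
  obtain ⟨m, rfl⟩ := Nat.exists_eq_add_of_le' hn
  refine ⟨?_, fun π => (simsun_avoid132_231_iff_strictMono_comp_succ π).trans
    Fin.strictMono_comp_succ_iff⟩
  rw [Nat.card_congr ((Equiv.subtypeEquivRight simsun_avoid132_231_iff_strictMono_comp_succ).trans
    strictMonoCompSuccEquiv), Nat.card_eq_fintype_card, Fintype.card_fin]
end

section
/- For every n ≥ 0, the number of simsun permutations of {1,…,n} that avoid both patterns 213 and 231 equals the Fibonacci number F_{n+1} (with F_1 = F_2 = 1). -/
/-- `π` contains the pattern 213. -/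
def Contains213 {n : ℕ} (π : Equiv.Perm (Fin n)) : Prop :=
  ∃ a b c : Fin n, a < b ∧ b < c ∧ π b < π a ∧ π a < π c

/-!
Avoiding 213 and 231 means that every entry is the minimum or the maximum of the entries from
its position on. For such a permutation, the subword of the `k` smallest entries can only skip
positions holding larger values, and extremality forbids these inside a descent; so the simsun
condition reduces to the absence of three consecutive decreasing entries. Such a permutation of
length `n + 2` starts either with its minimum, followed by one of length `n + 1`, or with its
maximum, which must then be followed by its minimum (otherwise the first three entries descend)
and one of length `n`. This is the Fibonacci recursion.
-/

open Function Equiv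

section Patterns

variable {α β : Type*} {n : ℕ}

def IsSuffixExtremal [LT α] (f : Fin n → α) : Prop :=
  ∀ a b c : Fin n, a < b → a < c → f b < f a → f c < f a

def NoDoubleDescent [LT α] (f : Fin n → α) : Prop :=
  ∀ a b c : Fin n, (a : ℕ) + 1 = b → (b : ℕ) + 1 = c → f c < f b → ¬ f b < f a

theorem isSuffixExtremal_cons_iff [LT α] {x : α} {f : Fin n → α} :
    IsSuffixExtremal (Fin.cons x f : Fin (n + 1) → α) ↔
      ((∃ i, f i < x) → ∀ i, f i < x) ∧ IsSuffixExtremal f := by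
  simp only [IsSuffixExtremal, Fin.forall_fin_succ, not_lt_zero, Fin.cons_zero, Fin.cons_succ,
    Fin.succ_pos, Fin.succ_lt_succ_iff, IsEmpty.forall_iff, implies_true, true_and, forall_const,
    forall_exists_index, and_congr_left_iff]
  grind

theorem noDoubleDescent_cons_iff [LT α] {x : α} {f : Fin n → α} :
    NoDoubleDescent (Fin.cons x f : Fin (n + 1) → α) ↔
      (∀ b c : Fin n, (b : ℕ) = 0 → (c : ℕ) = 1 → f c < f b → ¬ f b < x) ∧
        NoDoubleDescent f := by
  simp only [NoDoubleDescent, Fin.forall_fin_succ, Fin.cons_zero, Fin.cons_succ, Fin.val_succ,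
    Fin.coe_ofNat_eq_mod, Nat.zero_mod, Nat.add_eq_zero_iff, Fin.val_eq_zero_iff, one_ne_zero,
    and_false, Nat.add_right_cancel_iff, IsEmpty.forall_iff, implies_true, true_and,
    and_congr_left_iff]
  grind

theorem isSuffixExtremal_comp_iff [LinearOrder α] [Preorder β] {g : α → β} (hg : StrictMono g)
    {f : Fin n → α} : IsSuffixExtremal (g ∘ f) ↔ IsSuffixExtremal f := by
  simp only [IsSuffixExtremal, comp_apply, hg.lt_iff_lt]

theorem noDoubleDescent_comp_iff [LinearOrder α] [Preorder β] {g : α → β} (hg : StrictMono g)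
    {f : Fin n → α} : NoDoubleDescent (g ∘ f) ↔ NoDoubleDescent f := by
  simp only [NoDoubleDescent, comp_apply, hg.lt_iff_lt]

theorem IsSuffixExtremal.of_subsingleton [LT α] [Subsingleton (Fin n)] (f : Fin n → α) :
    IsSuffixExtremal f :=
  fun a b _ hab => absurd (Subsingleton.elim a b) hab.ne

theorem NoDoubleDescent.of_subsingleton [LT α] [Subsingleton (Fin n)] (f : Fin n → α) :
    NoDoubleDescent f := by
  intro a b _ hab
  rw [Subsingleton.elim a b] at hab
  omega

theorem IsSuffixExtremal.val_add_one_eq [Preorder α] {f : Fin n → α} (h : IsSuffixExtremal f)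
    {a b : Fin n} (hab : a < b) (hba : f b < f a) (hgap : ∀ m, a < m → m < b → f a < f m) :
    (a : ℕ) + 1 = b := by
  by_contra hne
  have hab' : (a : ℕ) < b := hab
  let m : Fin n := ⟨a + 1, by omega⟩
  have ham : a < m := Fin.lt_def.2 (Nat.lt_succ_self _)
  have hmb : m < b := Fin.lt_def.2 (by simp only [m]; omega)
  exact lt_asymm (h a b m hab ham hba) (hgap m ham hmb)

end Patterns

def suffixExtremalNoDoubleDescent (n : ℕ) : Set (Perm (Fin n)) :=
  {π | IsSuffixExtremal ⇑π ∧ NoDoubleDescent ⇑π}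

section Characterization

variable {n : ℕ} {π : Perm (Fin n)}

theorem isSuffixExtremal_iff_not_contains213_and_not_contains231 :
    IsSuffixExtremal ⇑π ↔ ¬Contains213 π ∧ ¬Contains231 π := by
  refine ⟨fun h => ⟨?_, ?_⟩, fun ⟨h213, h231⟩ a b c hab hac hba => ?_⟩
  · rintro ⟨a, b, c, hab, hbc, hba, hac⟩
    exact (h a b c hab (hab.trans hbc) hba).not_gt hac
  · rintro ⟨a, b, c, hab, hbc, hca, hab'⟩
    exact (h a c b (hab.trans hbc) hab hca).not_gt hab'
  · by_contra hca
    have hac' : π a < π c := (not_lt.1 hca).lt_of_ne (π.injective.ne hac.ne)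
    rcases lt_trichotomy b c with hbc | rfl | hcb
    · exact h213 ⟨a, b, c, hab, hbc, hba, hac'⟩
    · exact hca hba
    · exact h231 ⟨a, c, b, hac, hcb, hba, hac'⟩

theorem IsSimsun.noDoubleDescent (h : IsSimsun π) : NoDoubleDescent ⇑π := by
  intro a b c hab hbc hcb hba
  have hba' : (π b : ℕ) < π a := hba
  have hcb' : (π c : ℕ) < π b := hcb
  refine h (π a + 1) ⟨a, b, c, Fin.lt_def.2 (by omega), Fin.lt_def.2 (by omega), by omega,
    by omega, by omega, fun m h₁ h₂ => ?_, fun m h₁ h₂ => ?_, hcb, hba⟩ <;>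
  · rw [Fin.lt_def] at h₁ h₂
    omega

theorem IsSuffixExtremal.isSimsun (he : IsSuffixExtremal ⇑π) (hd : NoDoubleDescent ⇑π) :
    IsSimsun π := by
  rintro k ⟨a, b, c, hab, hbc, hak, -, -, hgap₁, hgap₂, hcb, hba⟩
  refine hd a b c ?_ ?_ hcb hba
  · exact he.val_add_one_eq hab hba fun m h₁ h₂ => hak.trans_le (hgap₁ m h₁ h₂)
  · exact he.val_add_one_eq hbc hcb fun m h₁ h₂ => (hba.trans hak).trans_le (hgap₂ m h₁ h₂)

theorem isSimsun_and_not_contains213_and_not_contains231_iff :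
    IsSimsun π ∧ ¬Contains213 π ∧ ¬Contains231 π ↔ π ∈ suffixExtremalNoDoubleDescent n := by
  rw [← isSuffixExtremal_iff_not_contains213_and_not_contains231]
  exact ⟨fun ⟨hs, he⟩ => ⟨he, hs.noDoubleDescent⟩, fun ⟨he, hd⟩ => ⟨he.isSimsun hd, he⟩⟩

end Characterization

namespace Equiv.Perm

variable {n : ℕ}

def prepend (v : Fin (n + 1)) (σ : Perm (Fin n)) : Perm (Fin (n + 1)) :=
  (finSuccEquiv n).trans (σ.optionCongr.trans (finSuccEquiv' v).symm)

theorem coe_prepend (v : Fin (n + 1)) (σ : Perm (Fin n)) :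
    ⇑(prepend v σ) = Fin.cons v (v.succAbove ∘ σ) := by
  ext i
  cases i using Fin.cases <;> simp [prepend]

@[simp]
theorem prepend_apply_zero (v : Fin (n + 1)) (σ : Perm (Fin n)) : prepend v σ 0 = v := by
  simp [coe_prepend]

@[simp]
theorem prepend_apply_succ (v : Fin (n + 1)) (σ : Perm (Fin n)) (i : Fin n) :
    prepend v σ i.succ = v.succAbove (σ i) := by
  simp [coe_prepend]

theorem prepend_injective (v : Fin (n + 1)) : Injective (prepend v : Perm (Fin n) → _) := by
  intro σ τ h
  ext i : 1
  simpa using congr($h i.succ)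

theorem exists_prepend_eq (π : Perm (Fin (n + 1))) : ∃ v σ, prepend v σ = π := by
  let e := (finSuccEquiv n).symm.trans (π.trans (finSuccEquiv' (π 0)))
  refine ⟨π 0, removeNone e, Equiv.ext fun i => ?_⟩
  cases i using Fin.cases with
  | zero => rfl
  | succ i =>
    have hsome : some (removeNone e i) = e (some i) :=
      removeNone_some e (Option.ne_none_iff_exists'.1 (by simp [e, (Fin.succ_ne_zero i).symm]))
    rw [prepend_apply_succ, ← finSuccEquiv'_symm_some, hsome]
    simp [e]

theorem isSuffixExtremal_prepend_iff {v : Fin (n + 1)} {σ : Perm (Fin n)} :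
    IsSuffixExtremal ⇑(prepend v σ) ↔ (v = 0 ∨ v = Fin.last n) ∧ IsSuffixExtremal ⇑σ := by
  rw [coe_prepend, isSuffixExtremal_cons_iff,
    isSuffixExtremal_comp_iff (Fin.strictMono_succAbove v)]
  refine and_congr_left' ?_
  simp only [comp_apply, Fin.succAbove_lt_iff_castSucc_lt]
  constructor
  · intro h
    by_contra! hv
    have hv₀ : 0 < (v : ℕ) := Fin.pos_iff_ne_zero.2 hv.1
    have hvn : (v : ℕ) < n := Fin.val_lt_last hv.2
    have := h ⟨σ.symm ⟨0, by omega⟩, by rw [apply_symm_apply, Fin.lt_def]; exact hv₀⟩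
      (σ.symm ⟨v, hvn⟩)
    simp at this
  · rintro (rfl | rfl) ⟨j, hj⟩ i
    · exact absurd hj (Fin.not_lt_zero _)
    · exact Fin.castSucc_lt_last (σ i)

theorem noDoubleDescent_prepend_zero_iff {σ : Perm (Fin n)} :
    NoDoubleDescent ⇑(prepend 0 σ) ↔ NoDoubleDescent ⇑σ := by
  rw [coe_prepend, noDoubleDescent_cons_iff,
    noDoubleDescent_comp_iff (Fin.strictMono_succAbove 0)]
  simp

theorem noDoubleDescent_prepend_prepend_zero_iff {v : Fin (n + 2)} {σ : Perm (Fin n)} :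
    NoDoubleDescent ⇑(prepend v (prepend 0 σ)) ↔ NoDoubleDescent ⇑σ := by
  rw [coe_prepend, noDoubleDescent_cons_iff,
    noDoubleDescent_comp_iff (Fin.strictMono_succAbove v), noDoubleDescent_prepend_zero_iff,
    and_iff_right_iff_imp]
  intro _ b c hb _ hcb
  obtain rfl : b = 0 := Fin.ext hb
  simp [Fin.succAbove_lt_succAbove_iff] at hcb

theorem apply_one_eq_zero_of_apply_zero_eq_last {π : Perm (Fin (n + 2))}
    (he : IsSuffixExtremal ⇑π) (hd : NoDoubleDescent ⇑π) (h₀ : π 0 = Fin.last (n + 1)) :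
    π 1 = 0 := by
  by_contra h₁
  obtain ⟨x, hx⟩ := π.surjective 0
  have hx₀ : x ≠ 0 := by
    rintro rfl
    simp [h₀] at hx
  have hx₁ : x ≠ 1 := by
    rintro rfl
    exact h₁ hx
  have h1x : (1 : ℕ) < x := by
    simp only [ne_eq, Fin.ext_iff, Fin.val_zero, Fin.val_one] at hx₀ hx₁
    omega
  let t : Fin (n + 2) := ⟨2, by omega⟩
  have h₂₁ : π t < π 1 :=
    he 1 x t h1x (Fin.lt_def.2 (by simp [t])) (hx ▸ Fin.pos_iff_ne_zero.2 h₁)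
  have h₁₀ : π 1 < π 0 :=
    h₀ ▸ Fin.lt_last_iff_ne_last.2 (h₀ ▸ π.injective.ne (by simp))
  exact hd 0 1 t (by simp) (by simp [t]) h₂₁ h₁₀

theorem prepend_zero_mem_iff {σ : Perm (Fin n)} :
    prepend 0 σ ∈ suffixExtremalNoDoubleDescent (n + 1) ↔ σ ∈ suffixExtremalNoDoubleDescent n := by
  simp only [suffixExtremalNoDoubleDescent, Set.mem_ofPred_eq, isSuffixExtremal_prepend_iff,
    noDoubleDescent_prepend_zero_iff, true_or, true_and]

theorem prepend_last_prepend_zero_mem_iff {σ : Perm (Fin n)} :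
    prepend (Fin.last (n + 1)) (prepend 0 σ) ∈ suffixExtremalNoDoubleDescent (n + 2) ↔
      σ ∈ suffixExtremalNoDoubleDescent n := by
  simp only [suffixExtremalNoDoubleDescent, Set.mem_ofPred_eq, isSuffixExtremal_prepend_iff,
    noDoubleDescent_prepend_prepend_zero_iff, true_or, or_true, true_and]

theorem exists_prepend_of_mem_add_two {π : Perm (Fin (n + 2))}
    (hπ : π ∈ suffixExtremalNoDoubleDescent (n + 2)) :
    (∃ σ ∈ suffixExtremalNoDoubleDescent (n + 1), prepend 0 σ = π) ∨
      ∃ σ ∈ suffixExtremalNoDoubleDescent n, prepend (Fin.last (n + 1)) (prepend 0 σ) = π := by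
  obtain ⟨v, σ, rfl⟩ := exists_prepend_eq π
  rcases (isSuffixExtremal_prepend_iff.1 hπ.1).1 with rfl | rfl
  · exact .inl ⟨σ, prepend_zero_mem_iff.1 hπ, rfl⟩
  · obtain ⟨w, ρ, rfl⟩ := exists_prepend_eq σ
    have h₁ := apply_one_eq_zero_of_apply_zero_eq_last hπ.1 hπ.2 (prepend_apply_zero _ _)
    rw [← Fin.succ_zero_eq_one, prepend_apply_succ, prepend_apply_zero, Fin.succAbove_last_apply,
      Fin.castSucc_eq_zero_iff] at h₁
    subst h₁
    exact .inr ⟨ρ, prepend_last_prepend_zero_mem_iff.1 hπ, rfl⟩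

end Equiv.Perm

open Equiv.Perm in
theorem card_suffixExtremalNoDoubleDescent_add_two (n : ℕ) :
    Nat.card (suffixExtremalNoDoubleDescent (n + 2)) =
      Nat.card (suffixExtremalNoDoubleDescent (n + 1)) +
        Nat.card (suffixExtremalNoDoubleDescent n) := by
  rw [← Nat.card_sum]
  refine (Nat.card_eq_of_bijective
    (Sum.elim (fun σ => ⟨prepend 0 σ.1, prepend_zero_mem_iff.2 σ.2⟩)
      fun σ => ⟨prepend (Fin.last (n + 1)) (prepend 0 σ.1),
        prepend_last_prepend_zero_mem_iff.2 σ.2⟩) ⟨?_, ?_⟩).symm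
  · refine Injective.sumElim (fun σ τ h => Subtype.ext (prepend_injective 0 congr($h.1)))
      (fun σ τ h => Subtype.ext (prepend_injective 0 (prepend_injective _ congr($h.1))))
      fun σ τ h => ?_
    simpa [Fin.ext_iff] using congr($h.1 0)
  · rintro ⟨π, hπ⟩
    rcases exists_prepend_of_mem_add_two hπ with ⟨σ, hσ, rfl⟩ | ⟨σ, hσ, rfl⟩
    · exact ⟨.inl ⟨σ, hσ⟩, rfl⟩
    · exact ⟨.inr ⟨σ, hσ⟩, rfl⟩

theorem card_suffixExtremalNoDoubleDescent_of_le_one {n : ℕ} (hn : n ≤ 1) :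
    Nat.card (suffixExtremalNoDoubleDescent n) = 1 := by
  have : Subsingleton (Fin n) := Fin.subsingleton_iff_le_one.2 hn
  have hall (π : Perm (Fin n)) : π ∈ suffixExtremalNoDoubleDescent n :=
    ⟨.of_subsingleton _, .of_subsingleton _⟩
  rw [Nat.card_congr (Equiv.subtypeUnivEquiv hall), Nat.card_perm, Nat.card_fin]
  interval_cases n <;> rfl

theorem card_suffixExtremalNoDoubleDescent (n : ℕ) :
    Nat.card (suffixExtremalNoDoubleDescent n) = Nat.fib (n + 1) := by
  induction n using Nat.twoStepInduction with
  | zero => exact card_suffixExtremalNoDoubleDescent_of_le_one zero_le_one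
  | one => exact card_suffixExtremalNoDoubleDescent_of_le_one le_rfl
  | more n ih₀ ih₁ =>
    rw [card_suffixExtremalNoDoubleDescent_add_two, ih₀, ih₁, Nat.fib_add_two (n := n + 1),
      add_comm]

/-- The number of simsun permutations of `{1, …, n}` avoiding both 213 and 231
equals the Fibonacci number `F (n+1)` (with `F 1 = F 2 = 1`). -/
theorem simsun_avoid213_231_count (n : ℕ) :
    Nat.card {π : Equiv.Perm (Fin n) //
      IsSimsun π ∧ ¬ Contains213 π ∧ ¬ Contains231 π} = Nat.fib (n + 1) := by
  rw [← card_suffixExtremalNoDoubleDescent]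
  exact Nat.card_congr (Equiv.subtypeEquivRight fun _ =>
    isSimsun_and_not_contains213_and_not_contains231_iff)
end
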